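/- arXiv:2007.04058 — 3 statements merged into one kernel-verified Lean document; each statement's English description precedes it below -/
import Mathlib

section
/- Let (Ω, F, P) be a probability space, let d ≥ 1, and let K ≥ l ≥ 1 be real numbers. Let Z_K := ℤ^d ∩ [−K/2, K/2]^d. For each y ∈ Z_K let X_y be a square-integrable real random variable with E[X_y²] ≤ σ², and assume that E[X_x · X_y] = 0 whenever x, y ∈ Z_K satisfy ‖x − y‖_∞ ≥ l. Then E[ ( (1/|Z_K|) Σ_{y ∈ Z_K} X_y )² ] ≤ 6^d · (l/K)^d · σ². -/
/-! Expanding the square, `E[(∑ X_y)²] = ∑_{x,y} E[X_x X_y]`. Only pairs at sup-distance `< l`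
contribute, each at most `σ²` since `2ab ≤ a² + b²`, and every `x` has at most
`2⌈l⌉ - 1 ≤ 3l` such partners per coordinate. So the second moment of the average is at most
`(3l)^d σ² / |Z_K|`, and `|Z_K| = (2⌊K/2⌋ + 1)^d ≥ (K/2)^d`. -/

open MeasureTheory Finset

section SecondMoment

variable {Ω : Type*} [MeasurableSpace Ω] {μ : Measure Ω}

lemma integral_mul_le_of_integral_sq_le {f g : Ω → ℝ} {c : ℝ} (hf : MemLp f 2 μ)
    (hg : MemLp g 2 μ) (hfc : ∫ ω, f ω ^ 2 ∂μ ≤ c) (hgc : ∫ ω, g ω ^ 2 ∂μ ≤ c) :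
    ∫ ω, f ω * g ω ∂μ ≤ c :=
  calc ∫ ω, f ω * g ω ∂μ ≤ ∫ ω, (f ω ^ 2 + g ω ^ 2) / 2 ∂μ :=
        integral_mono (hf.integrable_mul hg) ((hf.integrable_sq.add hg.integrable_sq).div_const 2)
          fun ω => by nlinarith [sq_nonneg (f ω - g ω)]
    _ = ((∫ ω, f ω ^ 2 ∂μ) + ∫ ω, g ω ^ 2 ∂μ) / 2 := by
        rw [integral_div, integral_add hf.integrable_sq hg.integrable_sq]
    _ ≤ c := by linarith

variable {ι : Type*}

lemma integral_sq_sum_eq {s : Finset ι} {X : ι → Ω → ℝ} (hX : ∀ y ∈ s, MemLp (X y) 2 μ) :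
    ∫ ω, (∑ y ∈ s, X y ω) ^ 2 ∂μ = ∑ x ∈ s, ∑ y ∈ s, ∫ ω, X x ω * X y ω ∂μ := by
  have hint : ∀ x ∈ s, ∀ y ∈ s, Integrable (fun ω => X x ω * X y ω) μ :=
    fun x hx y hy => (hX x hx).integrable_mul (hX y hy)
  simp_rw [sq, sum_mul_sum]
  rw [integral_finsetSum _ fun x hx => integrable_finsetSum _ (hint x hx)]
  exact sum_congr rfl fun x hx => integral_finsetSum _ (hint x hx)

lemma integral_sq_sum_le_of_uncorrelated (s : Finset ι) (near : ι → ι → Prop)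
    [DecidableRel near] {X : ι → Ω → ℝ} {c N : ℝ} (hX : ∀ y ∈ s, MemLp (X y) 2 μ)
    (hc : ∀ y ∈ s, ∫ ω, X y ω ^ 2 ∂μ ≤ c)
    (hcov : ∀ x ∈ s, ∀ y ∈ s, ¬ near x y → ∫ ω, X x ω * X y ω ∂μ = 0)
    (hN : ∀ x ∈ s, (#{y ∈ s | near x y} : ℝ) ≤ N) :
    ∫ ω, (∑ y ∈ s, X y ω) ^ 2 ∂μ ≤ #s * (N * c) := by
  rw [integral_sq_sum_eq hX]
  refine (sum_le_card_nsmul _ _ _ fun x hx => ?_).trans_eq (nsmul_eq_mul _ _)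
  have hc0 : 0 ≤ c := (integral_nonneg fun ω => sq_nonneg (X x ω)).trans (hc x hx)
  calc ∑ y ∈ s, ∫ ω, X x ω * X y ω ∂μ ≤ ∑ y ∈ s, if near x y then c else 0 := by
        refine sum_le_sum fun y hy => ?_
        split_ifs with hxy
        · exact integral_mul_le_of_integral_sq_le (hX x hx) (hX y hy) (hc x hx) (hc y hy)
        · exact (hcov x hx y hy hxy).le
    _ = #{y ∈ s | near x y} * c := by rw [← sum_filter, sum_const, nsmul_eq_mul]
    _ ≤ N * c := mul_le_mul_of_nonneg_right (hN x hx) hc0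

lemma integral_sq_average_le_of_uncorrelated (s : Finset ι) (near : ι → ι → Prop)
    [DecidableRel near] {X : ι → Ω → ℝ} {c N : ℝ} (hX : ∀ y ∈ s, MemLp (X y) 2 μ)
    (hc : ∀ y ∈ s, ∫ ω, X y ω ^ 2 ∂μ ≤ c)
    (hcov : ∀ x ∈ s, ∀ y ∈ s, ¬ near x y → ∫ ω, X x ω * X y ω ∂μ = 0)
    (hN : ∀ x ∈ s, (#{y ∈ s | near x y} : ℝ) ≤ N) :
    ∫ ω, ((#s : ℝ)⁻¹ * ∑ y ∈ s, X y ω) ^ 2 ∂μ ≤ N * c / #s := by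
  simp_rw [mul_pow]
  rw [integral_const_mul]
  calc ((#s : ℝ)⁻¹) ^ 2 * ∫ ω, (∑ y ∈ s, X y ω) ^ 2 ∂μ ≤ ((#s : ℝ)⁻¹) ^ 2 * (#s * (N * c)) :=
        mul_le_mul_of_nonneg_left (integral_sq_sum_le_of_uncorrelated s near hX hc hcov hN)
          (by positivity)
    _ = N * c / #s := by
        rcases (#s).eq_zero_or_pos with h | h
        · simp [h]
        · field_simp

end SecondMoment

section LatticeCount

lemma Int.half_lt_card_Icc_neg_floor_half {K : ℝ} (hK : 0 ≤ K) :
    K / 2 < #(Icc (-⌊K / 2⌋) ⌊K / 2⌋) := by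
  have hM : 0 ≤ ⌊K / 2⌋ := Int.floor_nonneg.mpr (by linarith)
  have hcard := Int.card_Icc_of_le (a := -⌊K / 2⌋) (b := ⌊K / 2⌋) (by omega)
  have hM' : (0 : ℝ) ≤ ⌊K / 2⌋ := by exact_mod_cast hM
  calc K / 2 < ⌊K / 2⌋ + 1 := Int.lt_floor_add_one _
    _ ≤ ((⌊K / 2⌋ + 1 - -⌊K / 2⌋ : ℤ) : ℝ) := by push_cast; linarith
    _ = #(Icc (-⌊K / 2⌋) ⌊K / 2⌋) := by rw [← hcard, Int.cast_natCast]

lemma Int.card_Ioo_sub_ceil_add_ceil_le {l : ℝ} (hl : 1 ≤ l) (a : ℤ) :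
    (#(Ioo (a - ⌈l⌉) (a + ⌈l⌉)) : ℝ) ≤ 3 * l := by
  have hcard := Int.card_Ioo_of_lt (a := a - ⌈l⌉) (b := a + ⌈l⌉)
    (by linarith [Int.one_le_ceil_iff.mpr (show (0 : ℝ) < l by linarith)])
  calc (#(Ioo (a - ⌈l⌉) (a + ⌈l⌉)) : ℝ) = ((a + ⌈l⌉ - (a - ⌈l⌉) - 1 : ℤ) : ℝ) := by
        rw [← hcard, Int.cast_natCast]
    _ ≤ 3 * l := by push_cast; linarith [Int.ceil_lt_add_one l]

lemma Int.abs_sub_lt_iff_mem_Ioo_ceil {l : ℝ} {a m : ℤ} :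
    |(a : ℝ) - m| < l ↔ m ∈ Ioo (a - ⌈l⌉) (a + ⌈l⌉) := by
  rw [mem_Ioo, ← Int.cast_sub, ← Int.cast_abs, ← Int.lt_ceil, abs_lt]
  omega

variable {d : ℕ}

lemma half_pow_le_card_of_mem_iff_abs_le {K : ℝ} (hK : 0 ≤ K) {Z : Finset (Fin d → ℤ)}
    (hZ : ∀ y : Fin d → ℤ, y ∈ Z ↔ ∀ i, |(y i : ℝ)| ≤ K / 2) :
    (K / 2) ^ d ≤ #Z := by
  have hZ_eq : Z = Fintype.piFinset fun _ => Icc (-⌊K / 2⌋) ⌊K / 2⌋ := by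
    ext y
    simp only [hZ, Fintype.mem_piFinset, mem_Icc, abs_le, neg_le, Int.le_floor]
    push_cast
    rfl
  rw [hZ_eq, Fintype.card_piFinset, prod_const, card_univ, Fintype.card_fin, Nat.cast_pow]
  exact pow_le_pow_left₀ (by linarith) (Int.half_lt_card_Icc_neg_floor_half hK).le d

lemma card_filter_forall_abs_sub_lt_le {l : ℝ} (hl : 1 ≤ l) (s : Finset (Fin d → ℤ))
    (x : Fin d → ℤ) : (#{y ∈ s | ∀ i, |(x i : ℝ) - y i| < l} : ℝ) ≤ (3 * l) ^ d := by
  have hsub : {y ∈ s | ∀ i, |(x i : ℝ) - y i| < l}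
      ⊆ Fintype.piFinset fun i => Ioo (x i - ⌈l⌉) (x i + ⌈l⌉) := fun y hy => by
    simp only [mem_filter, Int.abs_sub_lt_iff_mem_Ioo_ceil] at hy
    exact Fintype.mem_piFinset.mpr hy.2
  calc (#{y ∈ s | ∀ i, |(x i : ℝ) - y i| < l} : ℝ)
      ≤ ∏ i, (#(Ioo (x i - ⌈l⌉) (x i + ⌈l⌉)) : ℝ) := by
        rw [← Nat.cast_prod, ← Fintype.card_piFinset]; exact_mod_cast card_le_card hsub
    _ ≤ ∏ _i : Fin d, 3 * l := prod_le_prod (fun _ _ => by positivity)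
        fun i _ => Int.card_Ioo_sub_ceil_add_ceil_le hl (x i)
    _ = (3 * l) ^ d := by rw [prod_const, card_univ, Fintype.card_fin]

end LatticeCount

theorem stmt_0_general
    {Ω : Type*} [MeasurableSpace Ω] (P : Measure Ω)
    (d : ℕ) (K l σ : ℝ) (hl : 1 ≤ l) (hK : l ≤ K)
    (ZK : Finset (Fin d → ℤ))
    (hZK : ∀ y : Fin d → ℤ, y ∈ ZK ↔ ∀ i : Fin d, |(y i : ℝ)| ≤ K / 2)
    (X : (Fin d → ℤ) → Ω → ℝ)
    (hX2 : ∀ y ∈ ZK, MemLp (X y) 2 P)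
    (hvar : ∀ y ∈ ZK, ∫ ω, (X y ω) ^ 2 ∂P ≤ σ ^ 2)
    (hcov : ∀ x ∈ ZK, ∀ y ∈ ZK,
      (∃ i : Fin d, l ≤ |((x i : ℝ) - (y i : ℝ))|) →
      ∫ ω, X x ω * X y ω ∂P = 0) :
    ∫ ω, ((ZK.card : ℝ)⁻¹ * ∑ y ∈ ZK, X y ω) ^ 2 ∂P
      ≤ 6 ^ d * (l / K) ^ d * σ ^ 2 := by
  classical
  have hK0 : 0 < K := by linarith
  calc ∫ ω, ((ZK.card : ℝ)⁻¹ * ∑ y ∈ ZK, X y ω) ^ 2 ∂P ≤ (3 * l) ^ d * σ ^ 2 / #ZK :=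
        integral_sq_average_le_of_uncorrelated ZK (fun x y => ∀ i, |(x i : ℝ) - y i| < l)
          hX2 hvar
          (fun x hx y hy hxy => hcov x hx y hy (by simpa only [not_forall, not_lt] using hxy))
          fun x _ => card_filter_forall_abs_sub_lt_le hl ZK x
    _ ≤ (3 * l) ^ d * σ ^ 2 / (K / 2) ^ d :=
        div_le_div_of_nonneg_left (by positivity) (by positivity)
          (half_pow_le_card_of_mem_iff_abs_le hK0.le hZK)
    _ = 6 ^ d * (l / K) ^ d * σ ^ 2 := by
        rw [show (6 : ℝ) = 3 * 2 by norm_num]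
        simp only [div_pow, mul_pow]
        field_simp

/-- variance decay of a spatial average of a finite-range
uncorrelated family of random variables indexed by the lattice points of the
cube `Q_K`. -/
theorem stmt_0
    {Ω : Type*} [MeasurableSpace Ω] (P : Measure Ω) [IsProbabilityMeasure P]
    (d : ℕ) (hd : 1 ≤ d) (K l σ : ℝ) (hl : 1 ≤ l) (hK : l ≤ K)
    (ZK : Finset (Fin d → ℤ))
    (hZK : ∀ y : Fin d → ℤ, y ∈ ZK ↔ ∀ i : Fin d, |(y i : ℝ)| ≤ K / 2)
    (X : (Fin d → ℤ) → Ω → ℝ)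
    (hX2 : ∀ y ∈ ZK, MemLp (X y) 2 P)
    (hvar : ∀ y ∈ ZK, ∫ ω, (X y ω) ^ 2 ∂P ≤ σ ^ 2)
    (hcov : ∀ x ∈ ZK, ∀ y ∈ ZK,
      (∃ i : Fin d, l ≤ |((x i : ℝ) - (y i : ℝ))|) →
      ∫ ω, X x ω * X y ω ∂P = 0) :
    ∫ ω, ((ZK.card : ℝ)⁻¹ * ∑ y ∈ ZK, X y ω) ^ 2 ∂P
      ≤ 6 ^ d * (l / K) ^ d * σ ^ 2 :=
  stmt_0_general P d K l σ hl hK ZK hZK X hX2 hvar hcov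
end

section
/- Let m ≥ 1 be a real number, let δ be a real number with 0 < δ ≤ 1/2, and let k ≥ 1 be an integer with |k/m − 1| ≤ δ. Then m − k·log m + log(k!) ≤ m·δ² + (1/2)·log k + 1. Equivalently, −log( e^{−m} m^k / k! ) ≤ m·δ² + (1/2)·log k + 1. -/
/-!
Stirling's upper bound `k! ≤ e √k (k/e)^k` (the Stirling sequence `k! / (√(2k) (k/e)^k)`
decreases from its value `e/√2` at `k = 1`) turns the left-hand side into at most
`m (y log y - y + 1) + (1/2) log k + 1` with `y = k/m`, and `log y ≤ y - 1` gives
`y log y - y + 1 ≤ (y - 1)^2 ≤ δ^2`.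
-/

open Real Nat

theorem Stirling.stirlingSeq_le_stirlingSeq_one {n : ℕ} (hn : n ≠ 0) :
    Stirling.stirlingSeq n ≤ Stirling.stirlingSeq 1 := by
  obtain ⟨n, rfl⟩ := Nat.exists_eq_succ_of_ne_zero hn
  exact Stirling.stirlingSeq'_antitone (Nat.zero_le n)

theorem factorial_le_exp_one_mul_sqrt_mul_pow {n : ℕ} (hn : n ≠ 0) :
    (n ! : ℝ) ≤ exp 1 * √n * (n / exp 1) ^ n := by
  have hpos : 0 < √(2 * n : ℝ) * (n / exp 1) ^ n := by positivity
  have h := Stirling.stirlingSeq_le_stirlingSeq_one hn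
  rw [Stirling.stirlingSeq_one, Stirling.stirlingSeq, div_le_iff₀ hpos] at h
  calc (n ! : ℝ) ≤ exp 1 / √2 * (√(2 * n : ℝ) * (n / exp 1) ^ n) := h
    _ = exp 1 * √n * (n / exp 1) ^ n := by
      rw [Real.sqrt_mul zero_le_two]
      field_simp

theorem log_factorial_le (n : ℕ) :
    Real.log n ! ≤ n * Real.log n - n + 1 / 2 * Real.log n + 1 := by
  rcases eq_or_ne n 0 with rfl | hn
  · simp
  have hn' : (0 : ℝ) < n := by positivity
  calc Real.log n ! ≤ Real.log (exp 1 * √n * (n / exp 1) ^ n) :=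
        Real.log_le_log (by positivity) (factorial_le_exp_one_mul_sqrt_mul_pow hn)
    _ = n * Real.log n - n + 1 / 2 * Real.log n + 1 := by
      rw [Real.log_mul (by positivity) (by positivity), Real.log_mul (by positivity)
        (by positivity), Real.log_pow, Real.log_div hn'.ne' (by positivity), Real.log_exp,
        Real.log_sqrt hn'.le]
      ring

theorem mul_log_sub_add_one_le_sq {y : ℝ} (hy : 0 ≤ y) :
    y * Real.log y - y + 1 ≤ (y - 1) ^ 2 := by
  have : y * Real.log y ≤ y * (y - 1) := by
    rcases hy.eq_or_lt with rfl | hy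
    · simp
    · exact mul_le_mul_of_nonneg_left (Real.log_le_sub_one_of_pos hy) hy.le
  nlinarith

theorem mul_mul_log_mul (m y : ℝ) :
    m * y * Real.log (m * y) = m * y * Real.log m + m * (y * Real.log y) := by
  have h := Real.negMulLog_mul m y
  simp only [Real.negMulLog] at h
  linarith

theorem stmt_6_general (m : ℝ) (hm : 1 ≤ m) (δ : ℝ)
    (k : ℕ) (hkm : |(k : ℝ) / m - 1| ≤ δ) :
    m - (k : ℝ) * Real.log m + Real.log (Nat.factorial k)
      ≤ m * δ ^ 2 + (1 / 2) * Real.log k + 1 := by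
  have hm0 : 0 < m := by linarith
  set y := (k : ℝ) / m with hy
  have hky : (k : ℝ) = m * y := by rw [hy, mul_div_cancel₀ _ hm0.ne']
  have hsq : (y - 1) ^ 2 ≤ δ ^ 2 := by
    rw [← sq_abs]
    exact pow_le_pow_left₀ (abs_nonneg _) hkm 2
  have hentropy : m - k * Real.log m + (k * Real.log k - k) = m * (y * Real.log y - y + 1) := by
    rw [hky, mul_mul_log_mul]
    ring
  have hmain : m * (y * Real.log y - y + 1) ≤ m * δ ^ 2 :=
    mul_le_mul_of_nonneg_left ((mul_log_sub_add_one_le_sq (by positivity)).trans hsq) hm0.le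
  linarith [log_factorial_le k]

/-- single-block entropy estimate for a δ-good particle count
(the core of Lemma 5.3 of the paper). -/
theorem stmt_6 (m : ℝ) (hm : 1 ≤ m) (δ : ℝ) (hδ0 : 0 < δ) (hδ1 : δ ≤ 1 / 2)
    (k : ℕ) (hk : 1 ≤ k) (hkm : |(k : ℝ) / m - 1| ≤ δ) :
    m - (k : ℝ) * Real.log m + Real.log (Nat.factorial k)
      ≤ m * δ ^ 2 + (1 / 2) * Real.log k + 1 :=
  stmt_6_general m hm δ k hkm
end

section
/- Let φ : ℝ → ℝ be nondecreasing, bounded, and right-continuous, and fix ε > 0. Define Φ(s) := (2/ε²) ∫_0^ε (ε − t) · φ(s + t) dt. Then for every s ∈ ℝ, the right derivative of Φ at s exists and equals (2/ε²) ∫_0^ε ( φ(s + t) − φ(s) ) dt; that is, lim_{h ↘ 0} (Φ(s+h) − Φ(s))/h = (2/ε²) ∫_0^ε ( φ(s + t) − φ(s) ) dt. -/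
/-!
With `u = x + t`, `∫₀^ε (ε - t) φ (x + t) dt = (x + ε) (G (x + ε) - G x) - (K (x + ε) - K x)`,
where `G` and `K` are primitives of `φ` and of `u ↦ u φ u`. By the fundamental theorem of
calculus for right-continuous integrands, `G` and `K` have right derivatives `φ` and `u φ u`;
the two terms `(s + ε) φ (s + ε)` cancel, leaving
`G (s + ε) - G s - ε φ s = ∫₀^ε (φ (s + t) - φ s) dt`.
-/

open MeasureTheory Filter intervalIntegral Topology Set

variable {φ : ℝ → ℝ}

theorem MeasureTheory.LocallyIntegrable.intervalIntegrable (hφ : LocallyIntegrable φ) (a b : ℝ) :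
    IntervalIntegrable φ volume a b :=
  (hφ.integrableOn_isCompact isCompact_uIcc).intervalIntegrable

theorem MeasureTheory.LocallyIntegrable.id_mul (hφ : LocallyIntegrable φ) :
    LocallyIntegrable fun u => u * φ u :=
  locallyIntegrableOn_univ.1 <| (locallyIntegrableOn_univ.2 hφ).continuousOn_mul continuousOn_id
    isClosed_univ.isLocallyClosed

theorem MeasureTheory.LocallyIntegrable.hasDerivWithinAt_integral_Ici (hφ : LocallyIntegrable φ)
    {b : ℝ} (hb : ContinuousWithinAt φ (Ici b) b) (a : ℝ) :
    HasDerivWithinAt (fun x => ∫ u in a..x, φ u) (φ b) (Ici b) b :=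
  integral_hasDerivWithinAt_right (hφ.intervalIntegrable _ _)
    hφ.aestronglyMeasurable.stronglyMeasurableAtFilter (hb.mono Ioi_subset_Ici_self)

theorem integral_sub_mul_comp_add (hφ : LocallyIntegrable φ) (ε x : ℝ) :
    ∫ t in 0..ε, (ε - t) * φ (x + t) =
      (x + ε) * ((∫ u in 0..x + ε, φ u) - ∫ u in 0..x, φ u) -
        ((∫ u in 0..x + ε, u * φ u) - ∫ u in 0..x, u * φ u) := by
  have hint := hφ.intervalIntegrable
  have hint' := hφ.id_mul.intervalIntegrable
  calc ∫ t in 0..ε, (ε - t) * φ (x + t)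
      = ∫ t in 0..ε, (x + ε - (x + t)) * φ (x + t) := by simp only [add_sub_add_left_eq_sub]
    _ = ∫ u in x..x + ε, (x + ε - u) * φ u := by
      rw [integral_comp_add_left (fun u => (x + ε - u) * φ u), add_zero]
    _ = _ := by
      simp only [sub_mul]
      rw [integral_sub ((hint _ _).const_mul _) (hint' _ _), intervalIntegral.integral_const_mul,
        integral_interval_sub_left (hint _ _) (hint _ _),
        integral_interval_sub_left (hint' _ _) (hint' _ _)]

theorem hasDerivWithinAt_integral_sub_mul_comp_add (hφ : LocallyIntegrable φ) {s ε : ℝ}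
    (hs : ContinuousWithinAt φ (Ici s) s) (hsε : ContinuousWithinAt φ (Ici (s + ε)) (s + ε)) :
    HasDerivWithinAt (fun x => ∫ t in 0..ε, (ε - t) * φ (x + t))
      (∫ t in 0..ε, (φ (s + t) - φ s)) (Ici s) s := by
  have hshift : HasDerivWithinAt (· + ε) 1 (Ici s) s := (hasDerivWithinAt_id _ _).add_const ε
  have hmaps : MapsTo (· + ε) (Ici s) (Ici (s + ε)) := fun x hx => add_le_add_left hx ε
  have hG := hφ.hasDerivWithinAt_integral_Ici hs 0
  have hGε := (hφ.hasDerivWithinAt_integral_Ici hsε 0).comp s hshift hmaps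
  have hK := hφ.id_mul.hasDerivWithinAt_integral_Ici (continuousWithinAt_id.mul hs) 0
  have hKε := (hφ.id_mul.hasDerivWithinAt_integral_Ici
    (continuousWithinAt_id.mul hsε) 0).comp s hshift hmaps
  have hvalue : ∫ t in 0..ε, (φ (s + t) - φ s) =
      (∫ u in 0..s + ε, φ u) - (∫ u in 0..s, φ u) - ε * φ s := by
    rw [integral_comp_add_left (fun u => φ u - φ s), add_zero,
      integral_sub (hφ.intervalIntegrable _ _) intervalIntegrable_const,
      integral_interval_sub_left (hφ.intervalIntegrable _ _) (hφ.intervalIntegrable _ _),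
      intervalIntegral.integral_const, add_sub_cancel_left, smul_eq_mul]
  rw [funext (integral_sub_mul_comp_add hφ ε)]
  refine ((hshift.mul (hGε.sub hG)).sub (hKε.sub hK)).congr_deriv ?_
  simp only [Pi.sub_apply, Function.comp_apply, hvalue]
  ring

theorem HasDerivWithinAt.tendsto_slope_zero_right_of_Ici {f : ℝ → ℝ} {f' x : ℝ}
    (h : HasDerivWithinAt f f' (Ici x) x) :
    Tendsto (fun t => (f (x + t) - f x) / t) (𝓝[>] 0) (𝓝 f') := by
  have hslope := (hasDerivWithinAt_iff_tendsto_slope' (lt_irrefl x)).1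
    (hasDerivWithinAt_Ioi_iff_Ici.2 h)
  have hshift : Tendsto (x + ·) (𝓝[>] 0) (𝓝[>] x) := by
    simpa using (tendsto_map : Tendsto (x + ·) (𝓝[>] (0 : ℝ)) _)
  refine (hslope.comp hshift).congr fun t => ?_
  simp [slope, div_eq_inv_mul]

theorem stmt_10_general
    (φ : ℝ → ℝ) (hmono : Monotone φ)
    (hrc : ∀ s : ℝ, ContinuousWithinAt φ (Set.Ici s) s)
    (ε : ℝ)
    (Φ : ℝ → ℝ)
    (hΦ : ∀ s : ℝ, Φ s = (2 / ε ^ 2) * ∫ t in (0 : ℝ)..ε, (ε - t) * φ (s + t)) :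
    ∀ s : ℝ,
      Tendsto (fun h : ℝ => (Φ (s + h) - Φ s) / h) (nhdsWithin 0 (Set.Ioi 0))
        (nhds ((2 / ε ^ 2) * ∫ t in (0 : ℝ)..ε, (φ (s + t) - φ s))) := by
  intro s
  obtain rfl : Φ = fun x => (2 / ε ^ 2) * ∫ t in (0 : ℝ)..ε, (ε - t) * φ (x + t) := funext hΦ
  exact ((hasDerivWithinAt_integral_sub_mul_comp_add hmono.locallyIntegrable (hrc s)
    (hrc (s + ε))).const_mul _).tendsto_slope_zero_right_of_Ici

/-- right derivative of the regularized average
`Φ(s) = (2/ε²)∫₀^ε (ε−t)φ(s+t)dt` of a nondecreasing bounded right-continuous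
function (the computation behind (eq:E2ds) of the paper). -/
theorem stmt_10
    (φ : ℝ → ℝ) (hmono : Monotone φ) (B : ℝ) (hbdd : ∀ s, |φ s| ≤ B)
    (hrc : ∀ s : ℝ, ContinuousWithinAt φ (Set.Ici s) s)
    (ε : ℝ) (hε : 0 < ε)
    (Φ : ℝ → ℝ)
    (hΦ : ∀ s : ℝ, Φ s = (2 / ε ^ 2) * ∫ t in (0 : ℝ)..ε, (ε - t) * φ (s + t)) :
    ∀ s : ℝ,
      Tendsto (fun h : ℝ => (Φ (s + h) - Φ s) / h) (nhdsWithin 0 (Set.Ioi 0))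
        (nhds ((2 / ε ^ 2) * ∫ t in (0 : ℝ)..ε, (φ (s + t) - φ s))) :=
  stmt_10_general φ hmono hrc ε Φ hΦ
end
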